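/- arXiv:2202.11666 — 2 statements merged into one kernel-verified Lean document; each statement's English description precedes it below -/
import Mathlib

section
/- (Tensor model for monotone independence.) Let C be a unital ℂ-algebra, let B ⊆ C be a unital subalgebra, let ω̃, τ : C → ℂ be linear maps, let a₁, …, a_p ∈ C, and let b₀, b₁, …, b_q ∈ B with b₀ = 1. Assume: (i) τ(1) = 1, τ(b_i) = 0 for 1 ≤ i ≤ q, and τ(b_i b_j) = δ_{ij} for 1 ≤ i, j ≤ q; (ii) the pair is monotone: for every m ≥ 1, j₁, …, j_m ∈ {1,…,p}, and c₀, c₁, …, c_m ∈ B, one has ω̃(c₀ a_{j₁} c₁ a_{j₂} c₂ ⋯ a_{j_m} c_m) = ω̃(a_{j₁} ⋯ a_{j_m}) τ(c₀) τ(c₁) ⋯ τ(c_m); (iii) there are matrices A₁, …, A_p ∈ M_n(ℂ) with ω̃(a_{j₁} ⋯ a_{j_m}) = Tr(A_{j₁} ⋯ A_{j_m}) for all m ≥ 1 and j₁,…,j_m ∈ {1,…,p}. Given coefficients λ_{i₁,i₂,j} ∈ ℂ, set P = Σ_{i₁,i₂,j} λ_{i₁,i₂,j} b_{i₁} a_j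 b_{i₂} ∈ C and P̃ = Σ_{i₁,i₂,j} λ_{i₁,i₂,j} (I_n ⊗ B_{i₁}) (A_j ⊗ E) (I_n ⊗ B_{i₂}) ∈ M_n(ℂ) ⊗ M_{2^q}(ℂ). Then for every k ≥ 1, ω̃(P^k) = (Tr_n ⊗ η^{⊗q})(P̃^k), where (Tr_n ⊗ η^{⊗q})(M) denotes the sum over i ∈ {0,…,n−1} of the entries M((i,(0,…,0)), (i,(0,…,0))). -/
/-!
Expanding `P^k` and `P̃^k` by multilinearity, both sides become sums over words in the index
triples `(i₁, i₂, j)`, and it suffices to compare them word by word. In the word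
`b_{i₁} a_j b_{i₂} b_{i₁'} a_{j'} b_{i₂'} ⋯` the products `b_{i₂} b_{i₁'}` of neighbouring `b`'s are
elements of `B` standing between consecutive `a`'s, so monotonicity splits `ω̃` of the word into
`ω̃(a_{j₁} ⋯ a_{j_k}) = Tr(A_{j₁} ⋯ A_{j_k})` times the `τ`-values of these gaps. In the model the
same regrouping happens in the second tensor factor, where `E = e₀ e₀ᵀ` has rank one: the
`(0,0)`-entry of `C₀ E C₁ E ⋯ E C_k` is the product of the `(0,0)`-entries of the `C_r`. Finally the
`(0,0)`-entry agrees with `τ` on the gaps, because `(B_i B_j)₀₀ = δ_{ij} = τ(b_i b_j)` and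
`b₀ = 1`, `B₀ = I`.
-/

open Matrix BigOperators

/-- The 2×2 flip matrix `J = [[0,1],[1,0]]`. -/
noncomputable def J2 : Matrix (Fin 2) (Fin 2) ℂ := !![0, 1; 1, 0]

/-- The 2×2 matrix unit `E₁₁ = [[1,0],[0,0]]`. -/
noncomputable def E11 : Matrix (Fin 2) (Fin 2) ℂ := !![1, 0; 0, 0]

/-- `Bq q i` for `i = 1,…,q` is the Kronecker product with `J` in the `i`-th tensor factor and
the identity elsewhere; `Bq q 0` is the identity of `M_{2^q}(ℂ)`.  Here `M_{2^q}(ℂ)` is realized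
as matrices indexed by `Fin q → Fin 2`, and the Kronecker product entrywise is the product of the
entries of the factors. -/
noncomputable def Bq (q : ℕ) (i : Fin (q + 1)) :
    Matrix (Fin q → Fin 2) (Fin q → Fin 2) ℂ :=
  Matrix.of fun s t => ∏ j : Fin q,
    (if ((j : ℕ) + 1 = (i : ℕ)) then J2 else (1 : Matrix (Fin 2) (Fin 2) ℂ)) (s j) (t j)

/-- `Etens q = E₁₁^{⊗q}`. -/
noncomputable def Etens (q : ℕ) : Matrix (Fin q → Fin 2) (Fin q → Fin 2) ℂ :=
  Matrix.of fun s t => ∏ j : Fin q, E11 (s j) (t j)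

theorem sum_smul_pow_eq_sum_prod_ofFn {R A T : Type*} [CommSemiring R] [Semiring A] [Algebra R A]
    [Fintype T] (c : T → R) (x : T → A) (k : ℕ) :
    (∑ t, c t • x t) ^ k = ∑ g : Fin k → T, (∏ r, c (g r)) • (List.ofFn fun r => x (g r)).prod := by
  induction k with
  | zero => simp
  | succ k ih =>
    rw [pow_succ', ih, Finset.sum_mul_sum, ← (Fin.consEquiv fun _ => T).sum_comp,
      Fintype.sum_prod_type]
    refine Finset.sum_congr rfl fun t _ => Finset.sum_congr rfl fun g _ => ?_
    simp only [Fin.consEquiv, Equiv.coe_fn_mk, Fin.prod_univ_succ, Fin.cons_zero, Fin.cons_succ,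
      List.ofFn_succ, List.prod_cons, smul_mul_smul_comm]

theorem List.prod_ofFn_mul_mul_mul_last {M : Type*} [Monoid M] {k : ℕ} (u : Fin (k + 1) → M)
    (w v : Fin k → M) :
    (List.ofFn fun r => u r.castSucc * w r * v r).prod * u (Fin.last k)
      = u 0 * (List.ofFn fun r => w r * (v r * u r.succ)).prod := by
  induction k with
  | zero => simp
  | succ k ih =>
    have := ih (fun r => u r.succ) (fun r => w r.succ) (fun r => v r.succ)
    simp only [Fin.succ_last, Fin.succ_castSucc] at this
    rw [List.ofFn_succ, List.ofFn_succ, List.prod_cons, List.prod_cons, mul_assoc, this]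
    simp only [Fin.castSucc_zero, Fin.succ_zero_eq_one, mul_assoc]

/-- The factors `c` with `∏ r, x (i₁ r) * y r * x (i₂ r) = c 0 * ∏ r, y r * c (r + 1)` when
`x o = 1`: `c 0 = x (i₁ 0)` and `c (r + 1) = x (i₂ r) * x (i₁ (r + 1))`, reading `i₁ k` as `o`. -/
def gapFactors {M ι : Type*} [Monoid M] (x : ι → M) (o : ι) {k : ℕ} (i₁ i₂ : Fin k → ι) :
    Fin (k + 1) → M :=
  Fin.cons (x (Fin.snoc (α := fun _ => ι) i₁ o 0))
    fun r => x (i₂ r) * x (Fin.snoc (α := fun _ => ι) i₁ o r.succ)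

theorem prod_ofFn_eq_gapFactors {M ι : Type*} [Monoid M] {x : ι → M} {o : ι} (ho : x o = 1)
    {k : ℕ} (i₁ i₂ : Fin k → ι) (y : Fin k → M) :
    (List.ofFn fun r => x (i₁ r) * y r * x (i₂ r)).prod
      = gapFactors x o i₁ i₂ 0 * (List.ofFn fun r => y r * gapFactors x o i₁ i₂ r.succ).prod := by
  have h := List.prod_ofFn_mul_mul_mul_last (fun r => x (Fin.snoc (α := fun _ => ι) i₁ o r)) y
    (x ∘ i₂)
  simp only [Fin.snoc_castSucc, Fin.snoc_last, ho, mul_one, Function.comp_apply] at h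
  simpa [gapFactors, mul_assoc] using h

theorem gapFactors_mem {M ι : Type*} [Monoid M] {B : Set M} {x : ι → M} {o : ι} (hx : x o = 1)
    (hB : ∀ i j, x i * x j ∈ B) {k : ℕ} (i₁ i₂ : Fin k → ι) (r : Fin (k + 1)) :
    gapFactors x o i₁ i₂ r ∈ B := by
  cases r using Fin.cases with
  | zero => simpa [gapFactors, hx] using hB (Fin.snoc (α := fun _ => ι) i₁ o 0) o
  | succ r => exact hB _ _

theorem map_gapFactors_eq {M N R ι : Type*} [Monoid M] [Monoid N] {f : M → R} {g : N → R}
    {x : ι → M} {y : ι → N} {o : ι} (hx : x o = 1) (hy : y o = 1)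
    (hxy : ∀ i j, f (x i * x j) = g (y i * y j)) {k : ℕ} (i₁ i₂ : Fin k → ι) (r : Fin (k + 1)) :
    f (gapFactors x o i₁ i₂ r) = g (gapFactors y o i₁ i₂ r) := by
  cases r using Fin.cases with
  | zero => simpa [gapFactors, hx, hy] using hxy (Fin.snoc (α := fun _ => ι) i₁ o 0) o
  | succ r => exact hxy _ _

theorem Fin.clamp_val_self {m : ℕ} (r : Fin (m + 1)) : Fin.clamp r m = r :=
  Fin.ext (by simp [Nat.min_eq_left (Nat.le_of_lt_succ r.isLt)])

theorem map_mul_prod_ofFn_of_monotone {C R κ : Type*} [Monoid C] [CommMonoid R] {B : Set C}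
    {ωt τ : C → R} {a : κ → C}
    (hmono : ∀ m : ℕ, 1 ≤ m → ∀ (j : ℕ → κ) (c : ℕ → C), (∀ r, c r ∈ B) →
      ωt (c 0 * (List.ofFn fun r : Fin m => a (j ((r : ℕ) + 1)) * c ((r : ℕ) + 1)).prod)
        = ωt ((List.ofFn fun r : Fin m => a (j ((r : ℕ) + 1))).prod)
          * ∏ r ∈ Finset.range (m + 1), τ (c r))
    {m : ℕ} (j : Fin (m + 1) → κ) (c : Fin (m + 2) → C) (hc : ∀ r, c r ∈ B) :
    ωt (c 0 * (List.ofFn fun r => a (j r) * c r.succ).prod)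
      = ωt ((List.ofFn fun r => a (j r)).prod) * ∏ r, τ (c r) := by
  set F : ℕ → C := fun n => c (Fin.clamp n (m + 1))
  set J : ℕ → κ := fun n => j (Fin.clamp (n - 1) m)
  have hF : ∀ r : Fin (m + 2), c r = F r := fun r => by simp [F, Fin.clamp_val_self]
  have hJ : ∀ r : Fin (m + 1), j r = J (r + 1) := fun r => by simp [J, Fin.clamp_val_self]
  simp only [hF, hJ, Fin.val_succ, Fin.val_zero, Fin.prod_univ_eq_prod_range (fun r => τ (F r))]
  exact hmono (m + 1) m.succ_pos J F fun r => hc _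

theorem map_prod_ofFn_of_monotone {C R ι κ : Type*} [Monoid C] [CommMonoid R] {B : Set C}
    {ωt τ : C → R} {a : κ → C}
    (hmono : ∀ m : ℕ, 1 ≤ m → ∀ (j : ℕ → κ) (c : ℕ → C), (∀ r, c r ∈ B) →
      ωt (c 0 * (List.ofFn fun r : Fin m => a (j ((r : ℕ) + 1)) * c ((r : ℕ) + 1)).prod)
        = ωt ((List.ofFn fun r : Fin m => a (j ((r : ℕ) + 1))).prod)
          * ∏ r ∈ Finset.range (m + 1), τ (c r))
    {x : ι → C} {o : ι} (hx : x o = 1) (hB : ∀ i j, x i * x j ∈ B)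
    {m : ℕ} (i₁ i₂ : Fin (m + 1) → ι) (j : Fin (m + 1) → κ) :
    ωt (List.ofFn fun r => x (i₁ r) * a (j r) * x (i₂ r)).prod
      = ωt (List.ofFn fun r => a (j r)).prod * ∏ r, τ (gapFactors x o i₁ i₂ r) := by
  rw [prod_ofFn_eq_gapFactors hx]
  exact map_mul_prod_ofFn_of_monotone hmono j _ (gapFactors_mem hx hB i₁ i₂)

namespace Matrix

variable {ι l n R : Type*} [CommSemiring R]

theorem mul_single_one_mul_apply [Fintype n] [DecidableEq n] (X Y : Matrix n n R) (o a b : n) :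
    (X * single o o (1 : R) * Y) a b = X a o * Y o b := by
  rw [mul_apply, Finset.sum_eq_single o] <;> simp +contextual

theorem mul_prod_ofFn_single_mul_apply [Fintype n] [DecidableEq n] (o : n) {m : ℕ}
    (c : Fin (m + 1) → Matrix n n R) :
    (c 0 * (List.ofFn fun r => single o o (1 : R) * c r.succ).prod) o o = ∏ r, c r o o := by
  induction m with
  | zero => simp
  | succ m ih =>
    rw [List.ofFn_succ, List.prod_cons, Fin.prod_univ_succ, ← ih (fun r => c r.succ),
      Matrix.mul_assoc (single o o 1), ← Matrix.mul_assoc (c 0), mul_single_one_mul_apply]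

theorem kroneckerMap_mul_prod_ofFn [Fintype l] [DecidableEq l] [Fintype n] [DecidableEq n]
    {k : ℕ} (X : Fin k → Matrix l l R) (Y : Fin k → Matrix n n R) :
    (List.ofFn fun r => kroneckerMap (· * ·) (X r) (Y r)).prod
      = kroneckerMap (· * ·) (List.ofFn X).prod (List.ofFn Y).prod := by
  induction k with
  | zero => simp
  | succ k ih => simp [List.ofFn_succ, ih, mul_kronecker_mul]

theorem sum_kroneckerMap_apply_diag [Fintype l] (X : Matrix l l R) (Y : Matrix n n R) (o : n) :
    ∑ i, kroneckerMap (· * ·) X Y (i, o) (i, o) = trace X * Y o o := by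
  simp [trace, Finset.sum_mul]

def piKronecker [Fintype ι] (f : ι → Matrix n n R) : Matrix (ι → n) (ι → n) R :=
  of fun s t => ∏ j, f j (s j) (t j)

theorem piKronecker_mul [Fintype ι] [DecidableEq ι] [Fintype n] (f g : ι → Matrix n n R) :
    piKronecker f * piKronecker g = piKronecker fun j => f j * g j := by
  ext s t
  simp only [piKronecker, mul_apply, of_apply, ← Finset.prod_mul_distrib]
  exact (Fintype.prod_sum fun j x => f j (s j) x * g j x (t j)).symm

theorem piKronecker_one [Fintype ι] [DecidableEq n] :
    piKronecker (fun _ : ι => (1 : Matrix n n R)) = 1 := by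
  ext s t
  simp [piKronecker, one_apply, Fintype.prod_boole, funext_iff]

theorem piKronecker_single [Fintype ι] [DecidableEq n] (a b : n) :
    piKronecker (fun _ : ι => single a b (1 : R)) = single (fun _ => a) (fun _ => b) 1 := by
  ext s t
  simp [piKronecker, single_apply, Fintype.prod_boole, funext_iff, forall_and]

end Matrix

theorem Bq_eq_piKronecker (q : ℕ) (i : Fin (q + 1)) :
    Bq q i = piKronecker fun m : Fin q => if (m : ℕ) + 1 = i then J2 else 1 := rfl

theorem Etens_eq_single (q : ℕ) : Etens q = single (fun _ => 0) (fun _ => 0) 1 := by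
  have hE : E11 = single 0 0 1 := by ext x y; fin_cases x <;> fin_cases y <;> rfl
  rw [← piKronecker_single]
  exact congrArg piKronecker (funext fun _ => hE)

theorem Bq_zero (q : ℕ) : Bq q 0 = 1 := by
  simp [Bq_eq_piKronecker, piKronecker_one]

theorem Bq_mul_Bq_apply_zero (q : ℕ) (i j : Fin (q + 1)) :
    (Bq q i * Bq q j) (fun _ => 0) (fun _ => 0) = if i = j then 1 else 0 := by
  have hfactor : ∀ m : Fin q, ((if (m : ℕ) + 1 = i then J2 else 1)
      * (if (m : ℕ) + 1 = j then J2 else 1)) 0 0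
        = if ((m : ℕ) + 1 = i ↔ (m : ℕ) + 1 = j) then 1 else 0 := fun m => by
    split_ifs <;> simp_all [J2]
  have hiff : (∀ m : Fin q, ((m : ℕ) + 1 = i ↔ (m : ℕ) + 1 = j)) ↔ i = j := by
    refine ⟨fun h => Fin.ext ?_, fun h _ => h ▸ Iff.rfl⟩
    by_contra hne
    have := h ⟨max (i : ℕ) j - 1, by omega⟩
    simp only at this
    omega
  rw [Bq_eq_piKronecker, Bq_eq_piKronecker, piKronecker_mul]
  simp only [piKronecker, of_apply, hfactor, Fintype.prod_boole, hiff]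

theorem map_mul_eq_Bq_mul_Bq_apply_zero {C : Type*} [Monoid C] {τ : C → ℂ} {q : ℕ}
    {b : Fin (q + 1) → C} (hb0 : b 0 = 1) (hτ1 : τ 1 = 1)
    (hτb : ∀ i : Fin (q + 1), i ≠ 0 → τ (b i) = 0)
    (hτbb : ∀ i j : Fin (q + 1), i ≠ 0 → j ≠ 0 → τ (b i * b j) = if i = j then 1 else 0)
    (i j : Fin (q + 1)) :
    τ (b i * b j) = (Bq q i * Bq q j) (fun _ => 0) (fun _ => 0) := by
  rw [Bq_mul_Bq_apply_zero]
  rcases eq_or_ne i 0 with rfl | hi <;> rcases eq_or_ne j 0 with rfl | hj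
  · simp [hb0, hτ1]
  · simp [hb0, hτb j hj, hj.symm]
  · simp [hb0, hτb i hi, hi]
  · exact hτbb i j hi hj

theorem sum_prod_ofFn_kronecker_Bq_Etens_apply {q n k : ℕ} (A : Fin k → Matrix (Fin n) (Fin n) ℂ)
    (i₁ i₂ : Fin k → Fin (q + 1)) :
    ∑ i, (List.ofFn fun r =>
        kroneckerMap (· * ·) (1 : Matrix (Fin n) (Fin n) ℂ) (Bq q (i₁ r))
          * kroneckerMap (· * ·) (A r) (Etens q)
          * kroneckerMap (· * ·) (1 : Matrix (Fin n) (Fin n) ℂ) (Bq q (i₂ r))).prod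
        (i, fun _ => 0) (i, fun _ => 0)
      = trace (List.ofFn A).prod * ∏ r, gapFactors (Bq q) 0 i₁ i₂ r (fun _ => 0) (fun _ => 0) := by
  simp only [← mul_kronecker_mul, Matrix.one_mul, Matrix.mul_one]
  rw [kroneckerMap_mul_prod_ofFn, sum_kroneckerMap_apply_diag,
    prod_ofFn_eq_gapFactors (Bq_zero q), Etens_eq_single, mul_prod_ofFn_single_mul_apply]

/-- Tensor model for monotone independence: under the same setup as for the cyclic monotone
case, but with the pair being monotone with respect to `(τ, ω̃)`, one has
`ω̃(P^k) = (Tr_n ⊗ η^{⊗q})(P̃^k)` for all `k ≥ 1`, where `(Tr_n ⊗ η^{⊗q})(M)` is the sum over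
`i` of the entries `M((i,(0,…,0)),(i,(0,…,0)))`. -/
theorem tensor_model_monotone {C : Type*} [Ring C] [Algebra ℂ C]
    (Bsub : Subalgebra ℂ C) (ωt τ : C →ₗ[ℂ] ℂ)
    (p q n : ℕ) (a : Fin p → C) (b : Fin (q + 1) → C)
    (hb0 : b 0 = 1) (hbB : ∀ i, b i ∈ Bsub)
    (hτ1 : τ 1 = 1)
    (hτb : ∀ i : Fin (q + 1), i ≠ 0 → τ (b i) = 0)
    (hτbb : ∀ i j : Fin (q + 1), i ≠ 0 → j ≠ 0 →
      τ (b i * b j) = if i = j then 1 else 0)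
    (hmono : ∀ m : ℕ, 1 ≤ m → ∀ (j : ℕ → Fin p) (c : ℕ → C), (∀ r, c r ∈ Bsub) →
      ωt (c 0 * (List.ofFn fun r : Fin m => a (j ((r : ℕ) + 1)) * c ((r : ℕ) + 1)).prod)
        = ωt ((List.ofFn fun r : Fin m => a (j ((r : ℕ) + 1))).prod)
          * ∏ r ∈ Finset.range (m + 1), τ (c r))
    (A : Fin p → Matrix (Fin n) (Fin n) ℂ)
    (hA : ∀ m : ℕ, 1 ≤ m → ∀ j : ℕ → Fin p,
      ωt ((List.ofFn fun r : Fin m => a (j ((r : ℕ) + 1))).prod)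
        = Matrix.trace ((List.ofFn fun r : Fin m => A (j ((r : ℕ) + 1))).prod))
    (lam : Fin (q + 1) → Fin (q + 1) → Fin p → ℂ)
    (k : ℕ) (hk : 1 ≤ k) :
    ωt ((∑ i₁ : Fin (q + 1), ∑ i₂ : Fin (q + 1), ∑ j : Fin p,
          lam i₁ i₂ j • (b i₁ * a j * b i₂)) ^ k)
      = ∑ i : Fin n,
          ((∑ i₁ : Fin (q + 1), ∑ i₂ : Fin (q + 1), ∑ j : Fin p,
            lam i₁ i₂ j •
              (Matrix.kroneckerMap (· * ·) (1 : Matrix (Fin n) (Fin n) ℂ) (Bq q i₁)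
                * Matrix.kroneckerMap (· * ·) (A j) (Etens q)
                * Matrix.kroneckerMap (· * ·) (1 : Matrix (Fin n) (Fin n) ℂ) (Bq q i₂))) ^ k)
            (i, fun _ => 0) (i, fun _ => 0) := by
  obtain ⟨m, rfl⟩ : ∃ m, k = m + 1 := ⟨k - 1, by omega⟩
  simp only [← Fintype.sum_prod_type']
  rw [sum_smul_pow_eq_sum_prod_ofFn, sum_smul_pow_eq_sum_prod_ofFn, map_sum]
  simp only [Matrix.sum_apply]
  rw [Finset.sum_comm]
  refine Finset.sum_congr rfl fun g _ => ?_
  simp only [Matrix.smul_apply, map_smul, smul_eq_mul, ← Finset.mul_sum]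
  rw [map_prod_ofFn_of_monotone hmono hb0 (fun i j => mul_mem (hbB i) (hbB j)),
    sum_prod_ofFn_kronecker_Bq_Etens_apply]
  have hA' : ωt (List.ofFn fun r => a (g r).2.2).prod
      = trace (List.ofFn fun r => A (g r).2.2).prod := by
    simpa [Fin.clamp_val_self] using hA (m + 1) hk fun n => (g (Fin.clamp (n - 1) m)).2.2
  rw [hA', Finset.prod_congr rfl fun r _ =>
    map_gapFactors_eq (g := fun M => M (fun _ => 0) (fun _ => 0)) hb0 (Bq_zero q)
      (map_mul_eq_Bq_mul_Bq_apply_zero hb0 hτ1 hτb hτbb) _ _ r]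
end

section
/- (Explicit moment formula in the cyclic monotone case.) Let C be a unital ℂ-algebra, B ⊆ C a unital subalgebra, ω, τ : C → ℂ linear, a₁,…,a_p ∈ C, and b₀ = 1, b₁,…,b_q ∈ B with τ(1) = 1, τ(b_i) = 0 (1 ≤ i ≤ q), τ(b_i b_j) = δ_{ij} (1 ≤ i,j ≤ q), satisfying the cyclic monotone factorization rule: for every m ≥ 1, j₁,…,j_m ∈ {1,…,p} and c₀,…,c_m ∈ B, ω(c₀ a_{j₁} c₁ ⋯ a_{j_m} c_m) = ω(a_{j₁} ⋯ a_{j_m}) τ(c₁) ⋯ τ(c_{m−1}) τ(c_m c₀). For coefficients λ_{i₁,i₂,j} ∈ ℂ set P = Σ_{i₁,i₂=0}^{q} Σ_{j=1}^{p} λ_{i₁,i₂,j} b_{i₁} a_j b_{i₂}. Then for every k ≥ 1, ω(P^k) = Σ_{i₁,i₃,…,i_{2k−1}=0}^{q} Σ_{j₁,…,j_k=1}^{p} (∏_{r=1}^{k} λ_{i_{2r−1}, i_{2r+1}, j_r}) ω(a_{j₁} ⋯ a_{j_k}), where the index i_{2k+1} is understood cyclically as i₁. -/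
/-!
Expanding `P ^ k` multilinearly gives a sum of words `∏ᵣ b_{iᵣ} a_{jᵣ} b_{i'ᵣ}`. In such a word
the two elements of `B` between consecutive letters `a` merge into `b_{i'ᵣ} b_{iᵣ₊₁} ∈ B`, and the
cyclic monotone rule evaluates `ω` of the word as `ω(a_{j₁} ⋯ a_{jₖ}) ∏ᵣ τ(b_{i'ᵣ} b_{iᵣ₊₁})`,
indices taken cyclically: the last factor `τ(c_k c₀)` of the rule closes the cycle. Since
`b₀ = 1`, the `τ`-orthonormality of `b₁, …, b_q` extends to `τ(bᵢ bⱼ) = δᵢⱼ` for all `i, j`,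
so only `i'ᵣ = iᵣ₊₁` survives and the sum over the `i'` collapses.
-/

open Finset

section Expansion
variable {R : Type*} [Semiring R]

theorem Fintype.sum_pow_eq_sum_prod_ofFn {ι : Type*} [Fintype ι] (x : ι → R) (k : ℕ) :
    (∑ t, x t) ^ k = ∑ g : Fin k → ι, (List.ofFn fun r => x (g r)).prod := by
  induction k with
  | zero => simp
  | succ k ih =>
    rw [pow_succ', ih, sum_mul_sum, ← (Fin.consEquiv fun _ => ι).sum_comp,
      Fintype.sum_prod_type]
    simp [List.ofFn_succ]

theorem Fintype.sum_sum_sum_pow {ι κ μ : Type*} [Fintype ι] [Fintype κ] [Fintype μ]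
    (f : ι → κ → μ → R) (k : ℕ) :
    (∑ i, ∑ j, ∑ l, f i j l) ^ k = ∑ ii : Fin k → ι, ∑ jj : Fin k → κ, ∑ ll : Fin k → μ,
      (List.ofFn fun r => f (ii r) (jj r) (ll r)).prod := by
  let e := (Equiv.arrowProdEquivProdArrow (Fin k) (fun _ ↦ ι) fun _ ↦ κ × μ).trans
    ((Equiv.refl _).prodCongr (Equiv.arrowProdEquivProdArrow (Fin k) (fun _ ↦ κ) fun _ ↦ μ))
  calc (∑ i, ∑ j, ∑ l, f i j l) ^ k = (∑ t : ι × κ × μ, f t.1 t.2.1 t.2.2) ^ k := by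
        simp only [Fintype.sum_prod_type]
    _ = _ := by
        rw [Fintype.sum_pow_eq_sum_prod_ofFn, ← e.symm.sum_comp]
        simp only [Fintype.sum_prod_type]
        rfl

end Expansion

theorem List.prod_ofFn_smul {S A : Type*} [CommSemiring S] [Semiring A] [Algebra S A] {n : ℕ}
    (c : Fin n → S) (x : Fin n → A) :
    (List.ofFn fun r => c r • x r).prod = (∏ r, c r) • (List.ofFn x).prod := by
  induction n with
  | zero => simp
  | succ n ih =>
    simp only [List.ofFn_succ, List.prod_cons, Fin.prod_univ_succ, ih, smul_mul_smul_comm]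

theorem List.prod_ofFn_mul_mul_shift {M : Type*} [Monoid M] (u v w : ℕ → M) (n : ℕ) :
    (List.ofFn fun r : Fin n => u r * w r * v r).prod * u n
      = u 0 * (List.ofFn fun r : Fin n => w r * (v r * u (r + 1))).prod := by
  induction n with
  | zero => simp
  | succ n ih =>
    simp only [List.ofFn_succ', List.prod_concat, Fin.val_castSucc, Fin.val_last]
    rw [← mul_assoc (u 0), ← ih]
    simp only [mul_assoc]

theorem Fintype.sum_prod_mul_ite_eq {α β R : Type*} [Fintype α] [DecidableEq α] [Fintype β]
    [DecidableEq β] [CommSemiring R] (F : α → β → R) (z : α → β) :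
    ∑ y : α → β, ∏ r, F r (y r) * (if y r = z r then 1 else 0) = ∏ r, F r (z r) := by
  rw [← Fintype.prod_sum fun r t => F r t * if t = z r then 1 else 0]
  simp only [mul_boole, Fintype.sum_ite_eq']

theorem apply_mul_eq_ite {M R ι : Type*} [MulOneClass M] [MulZeroOneClass R] [DecidableEq ι]
    (τ : M → R) (b : ι → M) {i₀ : ι} (hb : b i₀ = 1) (hτ1 : τ 1 = 1)
    (hτb : ∀ i, i ≠ i₀ → τ (b i) = 0)
    (hτbb : ∀ i j, i ≠ i₀ → j ≠ i₀ → τ (b i * b j) = if i = j then 1 else 0) (i j : ι) :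
    τ (b i * b j) = if i = j then 1 else 0 := by
  by_cases hi : i = i₀ <;> by_cases hj : j = i₀
  · simp [hi, hj, hb, hτ1]
  · simp [hi, hb, hτb j hj, Ne.symm hj]
  · simp [hj, hb, hτb i hi, hi]
  · exact hτbb i j hi hj

section CyclicMonotone

variable {K C : Type*} [CommRing K] [Ring C] [Algebra K C]
  (B : Subalgebra K C) (ω τ : C →ₗ[K] K) {p : ℕ} (a : Fin p → C)

def CyclicMonotoneFactorization : Prop :=
  ∀ m : ℕ, 1 ≤ m → ∀ (j : ℕ → Fin p) (c : ℕ → C), (∀ r, c r ∈ B) →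
    ω (c 0 * (List.ofFn fun r : Fin m => a (j ((r : ℕ) + 1)) * c ((r : ℕ) + 1)).prod)
      = ω ((List.ofFn fun r : Fin m => a (j ((r : ℕ) + 1))).prod)
        * (∏ r ∈ Icc 1 (m - 1), τ (c r)) * τ (c m * c 0)

variable {B ω τ a}

theorem CyclicMonotoneFactorization.map_prod_ofFn_nat (h : CyclicMonotoneFactorization B ω τ a)
    {x y : ℕ → C} (hx : ∀ r, x r ∈ B) (hy : ∀ r, y r ∈ B) (j : ℕ → Fin p) (n : ℕ) :
    ω (List.ofFn fun r : Fin (n + 1) => x r * a (j r) * y r).prod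
      = ω (List.ofFn fun r : Fin (n + 1) => a (j r)).prod
        * (∏ r ∈ range n, τ (y r * x (r + 1))) * τ (y n * x 0) := by
  -- `u` pads `x` with `1` so that the last block is `c (n + 1) = y n`.
  let u : ℕ → C := fun s => if s ≤ n then x s else 1
  let c : ℕ → C := fun s => Nat.casesOn (motive := fun _ => C) s (x 0) fun s => y s * u (s + 1)
  have hu : ∀ s, u s ∈ B := fun s => by
    by_cases hs : s ≤ n <;> simp [u, hs, hx s, one_mem]
  have hc : ∀ s, c s ∈ B := by
    rintro (_ | s)
    exacts [hx 0, mul_mem (hy s) (hu _)]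
  have hword : (List.ofFn fun r : Fin (n + 1) => x r * a (j r) * y r).prod
      = c 0 * (List.ofFn fun r : Fin (n + 1) => a (j r) * c (r + 1)).prod := by
    have hshift := List.prod_ofFn_mul_mul_shift u y (fun r => a (j r)) (n + 1)
    simp only [u, Nat.lt_succ_iff.mp (Fin.is_lt _), if_true, show ¬n + 1 ≤ n by omega, if_false,
      mul_one] at hshift
    exact hshift
  have hmid : ∏ r ∈ Icc 1 n, τ (c r) = ∏ r ∈ range n, τ (y r * x (r + 1)) := by
    rw [← Ico_add_one_right_eq_Icc, prod_Ico_eq_prod_range, Nat.add_sub_cancel]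
    refine prod_congr rfl fun r hr => ?_
    rw [add_comm]
    simp [c, u, mem_range.mp hr]
  have hrule := h (n + 1) (by omega) (fun s => j (s - 1)) c hc
  simp only [Nat.add_sub_cancel] at hrule
  rw [hword, hrule, hmid]
  simp [c, u]

open Fin.NatCast in
theorem CyclicMonotoneFactorization.map_prod_ofFn (h : CyclicMonotoneFactorization B ω τ a)
    {n : ℕ} {x y : Fin (n + 1) → C} (hx : ∀ r, x r ∈ B) (hy : ∀ r, y r ∈ B)
    (j : Fin (n + 1) → Fin p) :
    ω (List.ofFn fun r => x r * a (j r) * y r).prod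
      = ω (List.ofFn fun r => a (j r)).prod * ∏ r, τ (y r * x (r + 1)) := by
  have hnat := h.map_prod_ofFn_nat (x := fun s => x (s : Fin (n + 1)))
    (y := fun s => y (s : Fin (n + 1))) (fun _ => hx _) (fun _ => hy _) (fun s => j s) n
  simp only [Fin.cast_val_eq_self, Nat.cast_add, Nat.cast_one, Nat.cast_zero] at hnat
  have hcycle : ∏ r : Fin (n + 1), τ (y r * x (r + 1))
      = ∏ s ∈ range (n + 1), τ (y (s : Fin (n + 1)) * x ((s : Fin (n + 1)) + 1)) := by
    rw [← Fin.prod_univ_eq_prod_range]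
    simp only [Fin.cast_val_eq_self]
  rw [hnat, hcycle, prod_range_succ, ← Nat.cast_succ n, Fin.natCast_self, mul_assoc]

end CyclicMonotone

/-- Explicit moment formula in the cyclic monotone case: with
`P = Σ_{i₁,i₂=0}^{q} Σ_{j=1}^{p} λ_{i₁,i₂,j} b_{i₁} a_j b_{i₂}`, for every `k = e + 1 ≥ 1`,
`ω(P^k) = Σ_{i₁,i₃,…,i_{2k−1}} Σ_{j₁,…,j_k} (∏_{r=1}^{k} λ_{i_{2r−1},i_{2r+1},j_r})
ω(a_{j₁} ⋯ a_{j_k})`, where `i_{2k+1}` is understood cyclically as `i₁` (the odd-position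
indices are encoded as a function `ii : Fin k → Fin (q+1)` and the cyclic successor as
`ii (r + 1)` in `Fin k`). -/
theorem moment_formula_cyclic_monotone {C : Type*} [Ring C] [Algebra ℂ C]
    (Bsub : Subalgebra ℂ C) (ω τ : C →ₗ[ℂ] ℂ)
    (p q : ℕ) (a : Fin p → C) (b : Fin (q + 1) → C)
    (hb0 : b 0 = 1) (hbB : ∀ i, b i ∈ Bsub)
    (hτ1 : τ 1 = 1)
    (hτb : ∀ i : Fin (q + 1), i ≠ 0 → τ (b i) = 0)
    (hτbb : ∀ i j : Fin (q + 1), i ≠ 0 → j ≠ 0 →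
      τ (b i * b j) = if i = j then 1 else 0)
    (hcyc : ∀ m : ℕ, 1 ≤ m → ∀ (j : ℕ → Fin p) (c : ℕ → C), (∀ r, c r ∈ Bsub) →
      ω (c 0 * (List.ofFn fun r : Fin m => a (j ((r : ℕ) + 1)) * c ((r : ℕ) + 1)).prod)
        = ω ((List.ofFn fun r : Fin m => a (j ((r : ℕ) + 1))).prod)
          * (∏ r ∈ Finset.Icc 1 (m - 1), τ (c r)) * τ (c m * c 0))
    (lam : Fin (q + 1) → Fin (q + 1) → Fin p → ℂ)
    (e : ℕ) :
    ω ((∑ i₁ : Fin (q + 1), ∑ i₂ : Fin (q + 1), ∑ j : Fin p,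
          lam i₁ i₂ j • (b i₁ * a j * b i₂)) ^ (e + 1))
      = ∑ ii : Fin (e + 1) → Fin (q + 1), ∑ jj : Fin (e + 1) → Fin p,
          (∏ r : Fin (e + 1), lam (ii r) (ii (r + 1)) (jj r))
            * ω ((List.ofFn fun r : Fin (e + 1) => a (jj r)).prod) := by
  have hδ := apply_mul_eq_ite τ b hb0 hτ1 hτb hτbb
  rw [Fintype.sum_sum_sum_pow]
  simp only [map_sum, List.prod_ofFn_smul, map_smul, smul_eq_mul]
  refine sum_congr rfl fun ii _ => ?_
  rw [sum_comm]
  refine sum_congr rfl fun jj _ => ?_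
  simp only [CyclicMonotoneFactorization.map_prod_ofFn hcyc (fun _ => hbB _) (fun _ => hbB _), hδ]
  rw [← Fintype.sum_prod_mul_ite_eq (fun r t => lam (ii r) t (jj r)) fun r => ii (r + 1), sum_mul]
  refine sum_congr rfl fun y _ => ?_
  rw [prod_mul_distrib]
  ring
end
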